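/- arXiv:1507.01423 — 3 statements merged into one kernel-verified Lean document; each statement's English description precedes it below -/
import Mathlib

section
/- Let (α, ∏_{i=1}^n C_i, A, γ) be a Galois connection between the componentwise-ordered product ∏_{i=1}^n C_i of complete lattices C_i and a complete lattice A. Fix i ∈ {1,…,n} and define: A_i = {c_i ∈ C_i : ∃a ∈ A with γ(a)_i = c_i}, ordered by the restriction of the order of C_i; γ_i : A_i → C_i as the identity inclusion; and α_i : C_i → A_i by α_i(c_i) = γ(α(c_i, ⊥_{−i}))_i, where (c_i, ⊥_{−i}) denotes the tuple with c_i in coordinate i and the bottom element of C_j in each coordinate j ≠ i. Then (α_i, C_i, A_i, γ_i) is a Galois connection (in particular A_i is closed under arbitrary infima of C_i taken of its subsets, hence a complete lattice). Moreover, if (α, ∏ C_i, A, γ) is (finitely) disjunctive then so is (α_i, C_i, A_i, γ_i). -/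
/-!
The embedding `cᵢ ↦ (cᵢ, ⊥₋ᵢ)` is left adjoint to evaluation at `i`, so
`cᵢ ↦ α (cᵢ, ⊥₋ᵢ)` is left adjoint to `a ↦ γ(a)ᵢ`, and `Aᵢ` is the range of this upper adjoint.
The range of any upper adjoint is closed under infima and is the target of a Galois connection
with the inclusion as upper adjoint. Evaluation at `i` preserves suprema, so if `γ` does, the
upper adjoint `a ↦ γ(a)ᵢ` does too and its range is closed under the corresponding suprema.
-/

open Function Set

theorem galoisConnection_update_bot_eval {ι : Type*} [DecidableEq ι] {π : ι → Type*}
    [∀ j, Preorder (π j)] [∀ j, OrderBot (π j)] (i : ι) :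
    GaloisConnection (update ⊥ i : π i → ∀ j, π j) (eval i) := fun _ _ =>
  update_le_iff.trans <| and_iff_left fun _ _ => bot_le

section Range

variable {α β : Type*}

theorem GaloisConnection.sInf_mem_range_u [CompleteLattice α] [CompleteLattice β]
    {l : β → α} {u : α → β} (gc : GaloisConnection l u) {T : Set β} (hT : T ⊆ range u) :
    sInf T ∈ range u :=
  ⟨sInf (u ⁻¹' T), by rw [gc.u_sInf, ← sInf_image, image_preimage_eq_of_subset hT]⟩

theorem GaloisConnection.rangeFactorization_u [Preorder α] [Preorder β]
    {l : β → α} {u : α → β} (gc : GaloisConnection l u) :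
    GaloisConnection (fun c => (⟨u (l c), l c, rfl⟩ : {b // ∃ a, u a = b})) (fun x => (x : β)) := by
  rintro c ⟨_, a, rfl⟩
  exact ⟨(gc.le_u_l c).trans, fun h => gc.monotone_u (gc.l_le h)⟩

theorem sSup_mem_range_of_map_sSup [SupSet α] [SupSet β] {f : α → β}
    (hf : ∀ s, f (sSup s) = sSup (f '' s)) {T : Set β} (hT : T ⊆ range f) : sSup T ∈ range f :=
  ⟨sSup (f ⁻¹' T), by rw [hf, image_preimage_eq_of_subset hT]⟩

theorem sup_mem_range_of_map_sup [Max α] [Max β] {f : α → β}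
    (hf : ∀ x y, f (x ⊔ y) = f x ⊔ f y) {x y : β} (hx : x ∈ range f) (hy : y ∈ range f) :
    x ⊔ y ∈ range f := by
  obtain ⟨a, rfl⟩ := hx
  obtain ⟨b, rfl⟩ := hy
  exact ⟨a ⊔ b, hf a b⟩

end Range

/-- decomposition of a Galois connection on a product of complete lattices
into a Galois connection on the i-th component.  The abstract domain is
`Aᵢ = {cᵢ | ∃ a, γ a i = cᵢ}` (which is closed under arbitrary infima of `C i`,
hence a complete lattice), `γᵢ` is the identity inclusion and
`αᵢ cᵢ = γ (α (cᵢ, ⊥₋ᵢ)) i`.  Moreover, if `(α, ∏ Cᵢ, A, γ)` is (finitely)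
disjunctive then so is `(αᵢ, Cᵢ, Aᵢ, γᵢ)`, i.e. `Aᵢ` is closed under (finite)
suprema as well. -/
theorem decomposition_of_product_galois_connection {n : ℕ} {C : Fin n → Type*}
    [∀ j, CompleteLattice (C j)] {A : Type*} [CompleteLattice A]
    (α : (∀ j, C j) → A) (γ : A → (∀ j, C j))
    (hgc : GaloisConnection α γ) (i : Fin n) :
    (∀ T : Set (C i), T ⊆ {ci | ∃ a, γ a i = ci} → sInf T ∈ {ci | ∃ a, γ a i = ci}) ∧
    GaloisConnection
      (fun ci : C i =>
        (⟨γ (α (Function.update ⊥ i ci)) i, α (Function.update ⊥ i ci), rfl⟩ :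
          {ci : C i // ∃ a, γ a i = ci}))
      (fun x : {ci : C i // ∃ a, γ a i = ci} => (x : C i)) ∧
    ((∀ T : Set A, γ (sSup T) = sSup (γ '' T)) →
      ∀ T : Set (C i), T ⊆ {ci | ∃ a, γ a i = ci} → sSup T ∈ {ci | ∃ a, γ a i = ci}) ∧
    ((∀ x y : A, γ (x ⊔ y) = γ x ⊔ γ y) →
      ∀ x y : C i, (∃ a, γ a i = x) → (∃ a, γ a i = y) → ∃ a, γ a i = x ⊔ y) := by
  have hgci : GaloisConnection (fun ci => α (update ⊥ i ci)) (fun a => γ a i) :=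
    (galoisConnection_update_bot_eval i).compose hgc
  refine ⟨fun T => hgci.sInf_mem_range_u, hgci.rangeFactorization_u, fun hγ T => ?_,
    fun hγ x y => sup_mem_range_of_map_sup fun a b => congrFun (hγ a b) i⟩
  exact sSup_mem_range_of_map_sSup fun s => by
    rw [hγ, sSup_apply_eq_sSup_image, image_image]
end

section
/- Let C be a complete lattice and let f : C → ℘∧(C) be an S-monotone multivalued function (each value f(c) contains its infimum). Then f has a least fixed point, i.e., the set Fix(f) = {x ∈ C : x ∈ f(x)} has a least element; moreover, lfp(f) = ⋁_{α ∈ Ord} f∧^α(⊥), where f∧(c) = ⋀ f(c) and f∧^α denotes the α-th transfinite iterate of f∧ starting from the bottom element ⊥ of C. -/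
/-!
`c ↦ ⋀ f c` is monotone because `f` is S-monotone, so its transfinite iterates from `⊥` form an
increasing chain which, being indexed by all ordinals, must stabilise at a fixed point `p`;
`p` lies below every prefixed point. Since `⋀ f p ∈ f p`, `p` is a fixed point of `f`, and every
fixed point `x ∈ f x` of `f` is a prefixed point `⋀ f x ≤ x`.
-/

universe u

/-- Smyth preorder on subsets: `X ⪯ₛ Y` iff every `y ∈ Y` is above some `x ∈ X`. -/
def SmythLE {β : Type u} [LE β] (X Y : Set β) : Prop := ∀ y ∈ Y, ∃ x ∈ X, x ≤ y

/-- Upward transfinite iterates of `g` starting from `⊥`: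
`g^0 = ⊥`, `g^(β+1) = g (g^β)`, and suprema are taken at limit ordinals. -/
noncomputable def upIter {β : Type u} [CompleteLattice β] (g : β → β) (o : Ordinal.{u}) : β :=
  Ordinal.limitRecOn (motive := fun _ => β) o ⊥ (fun _ ih => g ih)
    (fun o _ ih => ⨆ b : Set.Iio o, ih b.1 b.2)

theorem SmythLE.sInf_le_sInf {β : Type u} [CompleteSemilatticeInf β] {X Y : Set β}
    (h : SmythLE X Y) : sInf X ≤ sInf Y :=
  le_sInf fun y hy => let ⟨_, hx, hxy⟩ := h y hy; (sInf_le hx).trans hxy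

namespace upIter

variable {β : Type u} [CompleteLattice β] {g : β → β}

theorem zero (g : β → β) : upIter g 0 = ⊥ :=
  Ordinal.limitRecOn_zero _ _ _

theorem add_one (g : β → β) (o : Ordinal.{u}) : upIter g (o + 1) = g (upIter g o) :=
  Ordinal.limitRecOn_add_one _ _ _ _

theorem limit (g : β → β) {o : Ordinal.{u}} (h : Order.IsSuccLimit o) :
    upIter g o = ⨆ b : Set.Iio o, upIter g b.1 :=
  Ordinal.limitRecOn_limit _ _ _ _ h

theorem le_of_map_le (hg : Monotone g) {x : β} (hx : g x ≤ x) (o : Ordinal.{u}) :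
    upIter g o ≤ x := by
  induction o using Ordinal.limitRecOn with
  | zero => simp [zero]
  | add_one a ih => exact (add_one g a).trans_le ((hg ih).trans hx)
  | limit o hl ih => exact (limit g hl).trans_le (iSup_le fun b => ih b.1 b.2)

theorem le_add_one (hg : Monotone g) (o : Ordinal.{u}) : upIter g o ≤ upIter g (o + 1) := by
  induction o using Ordinal.limitRecOn with
  | zero => simp [zero]
  | add_one a ih =>
    rw [add_one, add_one]
    exact hg ih
  | limit o hl ih =>
    rw [add_one, limit g hl]
    refine iSup_le fun b => (ih b.1 b.2).trans ?_
    rw [add_one]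
    exact hg (le_iSup (fun b : Set.Iio o => upIter g b.1) b)

theorem monotone (hg : Monotone g) : Monotone (upIter g) := by
  intro p o hpo
  induction o using Ordinal.limitRecOn with
  | zero => rw [nonpos_iff_eq_zero.mp hpo]
  | add_one a ih =>
    rcases hpo.eq_or_lt with rfl | hlt
    · exact le_rfl
    · exact (ih (Order.lt_add_one_iff.mp hlt)).trans (le_add_one hg a)
  | limit o hl ih =>
    rcases hpo.eq_or_lt with rfl | hlt
    · exact le_rfl
    · rw [limit g hl]
      exact le_iSup (fun b : Set.Iio o => upIter g b.1) ⟨p, hlt⟩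

theorem exists_map_eq (hg : Monotone g) : ∃ o : Ordinal.{u}, g (upIter g o) = upIter g o := by
  obtain ⟨o₁, o₂, heq, hne⟩ := Function.not_injective_iff.mp (not_injective_of_ordinal (upIter g))
  wlog hlt : o₁ < o₂ generalizing o₁ o₂
  · exact this o₂ o₁ heq.symm hne.symm (hne.lt_or_gt.resolve_left hlt)
  refine ⟨o₁, le_antisymm ?_ ?_⟩
  · rw [← add_one g o₁, heq]
    exact monotone hg (Order.add_one_le_of_lt hlt)
  · rw [← add_one g o₁]
    exact le_add_one hg o₁

theorem map_iSup (hg : Monotone g) : g (⨆ o, upIter g o) = ⨆ o, upIter g o := by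
  obtain ⟨o, ho⟩ := exists_map_eq hg
  rwa [le_antisymm (iSup_le (le_of_map_le hg ho.le)) (le_iSup (upIter g) o)]

end upIter

/-- an S-monotone multivalued function `f : C → ℘∧(C)` on a complete
lattice has a least fixed point, namely `⋁_{α ∈ Ord} f∧^α(⊥)` where `f∧ c = ⋀ f c`. -/
theorem multivalued_lfp {β : Type u} [CompleteLattice β] (f : β → Set β)
    (hmeet : ∀ c, sInf (f c) ∈ f c)
    (hmono : ∀ x y : β, x ≤ y → SmythLE (f x) (f y)) :
    IsLeast {x | x ∈ f x} (⨆ o : Ordinal.{u}, upIter (fun c => sInf (f c)) o) := by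
  have hg : Monotone fun c => sInf (f c) := fun x y hxy => (hmono x y hxy).sInf_le_sInf
  refine ⟨?_, fun x hx => iSup_le (upIter.le_of_map_le hg (sInf_le hx))⟩
  have hp := hmeet (⨆ o : Ordinal.{u}, upIter (fun c => sInf (f c)) o)
  rwa [upIter.map_iSup hg] at hp
end

section
/- Let (α_i, S_i, A_i, γ_i), i = 1,…,n, be finitely disjunctive Galois connections between complete lattices, and for a ∈ ∏_j A_j write γ(a) = (γ_j(a_j))_j and γ_{−i}(a_{−i}) = (γ_j(a_j))_{j≠i}. Fix i and let u_i : ∏_{j=1}^n S_j → ℝ^{N} (ordered componentwise) and define u_i^G : ∏_{j=1}^n A_j → ℝ^{N} by u_i^G(a) = u_i(γ(a)). Then: (1) if u_i(·, s_{−i}) : S_i → ℝ^{N} is supermodular (respectively quasisupermodular) for every s_{−i}, then u_i^G(·, a_{−i}) : A_i → ℝ^{N} is supermodular (respectively quasisupermodular) for every a_{−i}; and (2) if u_i(s_i, ·) : ∏_{j≠i} S_j → ℝ^{N} is monotone for every s_i, then u_i^G(a_i, ·) : ∏_{j≠i} A_j → ℝ^{N} is monotone for every a_i. -/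
/-!
A finitely disjunctive upper adjoint `γᵢ` preserves binary joins by assumption and binary meets
because it is a right adjoint, so it is a lattice homomorphism; composing with a lattice
homomorphism preserves (quasi)supermodularity. Since `γ` acts coordinatewise, varying the `i`-th
abstract coordinate only varies the `i`-th concrete one. Monotonicity in `a₋ᵢ` only needs each
`γⱼ` to be monotone.
-/

def Supermodular {L : Type*} [Lattice L] {N : ℕ} (u : L → (Fin N → ℝ)) : Prop :=
  ∀ x y : L, u x + u y ≤ u (x ⊔ y) + u (x ⊓ y)

def QuasiSupermodular {L : Type*} [Lattice L] {N : ℕ} (u : L → (Fin N → ℝ)) : Prop :=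
  ∀ x y : L, (u (x ⊓ y) ≤ u x → u y ≤ u (x ⊔ y)) ∧ (u (x ⊓ y) < u x → u y < u (x ⊔ y))

section Supermodular

variable {L L' : Type*} [Lattice L] [Lattice L'] {N : ℕ} {u : L → Fin N → ℝ}

theorem Supermodular.comp_latticeHom (hu : Supermodular u) (f : LatticeHom L' L) :
    Supermodular (u ∘ f) := fun x y => by
  simpa only [Function.comp_apply, map_sup, map_inf] using hu (f x) (f y)

theorem QuasiSupermodular.comp_latticeHom (hu : QuasiSupermodular u) (f : LatticeHom L' L) :
    QuasiSupermodular (u ∘ f) := fun x y => by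
  simpa only [Function.comp_apply, map_sup, map_inf] using hu (f x) (f y)

end Supermodular

def GaloisConnection.latticeHomOfMapSup {α β : Type*} [Lattice α] [Lattice β] {l : α → β}
    {u : β → α} (gc : GaloisConnection l u) (map_sup : ∀ x y, u (x ⊔ y) = u x ⊔ u y) :
    LatticeHom β α where
  toFun := u
  map_sup' := map_sup
  map_inf' _ _ := gc.u_inf

/-- given finitely disjunctive Galois connections
`(αⱼ, Sⱼ, Aⱼ, γⱼ)` between complete lattices and `u = uᵢ : ∏ⱼ Sⱼ → ℝ^N`, define the
abstract utility `u^G a = u (γ a)` where `γ a = (γⱼ (a j))ⱼ`.  Then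
(1) if `u(·, s₋ᵢ)` is supermodular (resp. quasisupermodular) for all `s₋ᵢ`, so is
`u^G(·, a₋ᵢ)` for all `a₋ᵢ`, and (2) if `u(sᵢ, ·)` is monotone for all `sᵢ`, so is
`u^G(aᵢ, ·)` for all `aᵢ`. -/
theorem abstract_utility_supermodular {n : ℕ} {S A : Fin n → Type*}
    [∀ j, CompleteLattice (S j)] [∀ j, CompleteLattice (A j)]
    (α : ∀ j, S j → A j) (γ : ∀ j, A j → S j)
    (hgc : ∀ j, GaloisConnection (α j) (γ j))
    (hdisj : ∀ j, ∀ x y : A j, γ j (x ⊔ y) = γ j x ⊔ γ j y)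
    {N : ℕ} (i : Fin n) (u : (∀ j, S j) → (Fin N → ℝ)) :
    ((∀ s : ∀ j, S j, Supermodular (fun x : S i => u (Function.update s i x))) →
      ∀ a : ∀ j, A j,
        Supermodular (fun x : A i => u (fun j => γ j (Function.update a i x j)))) ∧
    ((∀ s : ∀ j, S j, QuasiSupermodular (fun x : S i => u (Function.update s i x))) →
      ∀ a : ∀ j, A j,
        QuasiSupermodular (fun x : A i => u (fun j => γ j (Function.update a i x j)))) ∧
    ((∀ s t : ∀ j, S j, s ≤ t → s i = t i → u s ≤ u t) →
      ∀ a b : ∀ j, A j, a ≤ b → a i = b i →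
        u (fun j => γ j (a j)) ≤ u (fun j => γ j (b j))) := by
  have hupdate (a : ∀ j, A j) (x : A i) :
      (fun j => γ j (Function.update a i x j)) =
        Function.update (fun j => γ j (a j)) i (γ i x) :=
    funext fun j => Function.apply_update γ a i x j
  let γi := (hgc i).latticeHomOfMapSup (hdisj i)
  refine ⟨fun hS a => ?_, fun hQ a => ?_, fun hM a b hab hi => ?_⟩
  · simp only [hupdate]
    exact (hS fun j => γ j (a j)).comp_latticeHom γi
  · simp only [hupdate]
    exact (hQ fun j => γ j (a j)).comp_latticeHom γi
  · exact hM _ _ (fun j => (hgc j).monotone_u (hab j)) (congrArg (γ i) hi)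
end
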